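/- (Conditional covariance and independence for a Gaussian vector.) Let P, M ≥ 1, let A be a symmetric positive definite real P×P matrix, C a symmetric real M×M matrix and B a real M×P matrix such that the (P+M)×(P+M) block matrix [[A, Bᵀ],[B, C]] is symmetric positive semidefinite. Let (Y, F) be an ℝ^P × ℝ^M-valued random vector whose joint law is the multivariate Gaussian measure on ℝ^{P+M} with mean 0 and covariance [[A, Bᵀ],[B, C]]. Then the random vector F - B A⁻¹ Y is independent of Y, and its law is the multivariate Gaussian measure on ℝ^M with mean 0 and covariance C - B A⁻¹ Bᵀ. -/

import Mathlib

/-!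
The shear `(y, f) ↦ (y, f - B A⁻¹ y)` preserves Lebesgue measure, and with `g = f - B A⁻¹ y` and
the Schur complement `S = C - B A⁻¹ Bᵀ` of the block matrix `Σ` one has
`(y, f)ᵀ Σ⁻¹ (y, f) = yᵀ A⁻¹ y + gᵀ S⁻¹ g` and `det Σ = det A · det S`. So the shear carries the
density of `N(0, Σ)` to the product of the densities of `N(0, A)` and `N(0, S)`: the law of
`(Y, F - B A⁻¹ Y)` is `N(0, A) ⊗ N(0, S)`, which is independence together with the marginal law.
`Σ` is positive definite because the law is a probability measure, while the defining formula
gives the zero measure when `det Σ = 0`.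
-/

open MeasureTheory Real Matrix ProbabilityTheory

/-- The multivariate Gaussian probability measure on `ι → ℝ` with mean `μ` and covariance
matrix `S`: for `S` symmetric positive definite, its density with respect to the Lebesgue
measure is `z ↦ (2π)^(-n/2) det(S)^(-1/2) exp(-(1/2)(z-μ)ᵀ S⁻¹ (z-μ))`. -/
noncomputable def mvGaussian {ι : Type*} [Fintype ι] [DecidableEq ι]
    (μ : ι → ℝ) (S : Matrix ι ι ℝ) : Measure (ι → ℝ) :=
  (volume : Measure (ι → ℝ)).withDensity fun z =>
    ENNReal.ofReal ((2 * π) ^ (-(Fintype.card ι : ℝ) / 2) * S.det ^ (-(1 : ℝ) / 2) *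
      Real.exp (-(1 / 2) * ((z - μ) ⬝ᵥ S⁻¹.mulVec (z - μ))))

open scoped ENNReal MatrixOrder

noncomputable def gaussianWeight {ι : Type*} [Fintype ι] (N : Matrix ι ι ℝ) (z : ι → ℝ) :
    ℝ≥0∞ :=
  ENNReal.ofReal (exp (-(1 / 2) * (z ⬝ᵥ N *ᵥ z)))

lemma Real.rpow_neg_natCast_div_two {x : ℝ} (hx : 0 ≤ x) (n : ℕ) :
    x ^ (-(n : ℝ) / 2) = (√x ^ n)⁻¹ := by
  rw [neg_div, rpow_neg hx, sqrt_eq_rpow, ← rpow_natCast, ← rpow_mul hx, one_div_mul_eq_div]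

section Gaussian

variable {ι : Type*} [Fintype ι]

@[fun_prop]
lemma measurable_gaussianWeight (N : Matrix ι ι ℝ) : Measurable (gaussianWeight N) := by
  unfold gaussianWeight
  fun_prop

variable [DecidableEq ι]

lemma mvGaussian_eq_smul_withDensity (μ : ι → ℝ) {S : Matrix ι ι ℝ} (hS : 0 ≤ S.det) :
    mvGaussian μ S = ENNReal.ofReal (√(2 * π) ^ Fintype.card ι * √S.det)⁻¹ •
      volume.withDensity fun z => gaussianWeight S⁻¹ (z - μ) := by
  rw [mvGaussian, ← withDensity_smul' _ _ ENNReal.ofReal_ne_top]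
  congr 1
  funext z
  rw [Pi.smul_apply, smul_eq_mul, gaussianWeight, ← ENNReal.ofReal_mul (by positivity),
    Real.rpow_neg_natCast_div_two (by positivity),
    show -(1 : ℝ) / 2 = -((1 : ℕ) : ℝ) / 2 by simp, Real.rpow_neg_natCast_div_two hS, pow_one,
    mul_inv]

lemma mvGaussian_eq_zero_of_det_eq_zero (μ : ι → ℝ) {S : Matrix ι ι ℝ} (hS : S.det = 0) :
    mvGaussian μ S = 0 := by
  rw [mvGaussian_eq_smul_withDensity μ hS.ge, hS]
  simp

lemma lintegral_gaussianWeight_one :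
    ∫⁻ u : ι → ℝ, gaussianWeight 1 u = ENNReal.ofReal (√(2 * π) ^ Fintype.card ι) := by
  have hprod (u : ι → ℝ) :
      exp (-(1 / 2) * (u ⬝ᵥ (1 : Matrix ι ι ℝ) *ᵥ u)) = ∏ i, exp (-(1 / 2) * u i ^ 2) := by
    simp only [one_mulVec, dotProduct, Finset.mul_sum, exp_sum, sq]
  have hint : Integrable fun u : ι → ℝ => ∏ i, exp (-(1 / 2) * u i ^ 2) :=
    Integrable.fintype_prod fun _ => integrable_exp_neg_mul_sq (by norm_num)
  simp only [gaussianWeight, hprod]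
  rw [← ofReal_integral_eq_lintegral_ofReal hint (ae_of_all _ fun _ => by positivity), volume_pi,
    integral_fintype_prod_eq_pow fun t : ℝ => exp (-(1 / 2) * t ^ 2), integral_gaussian,
    div_div_eq_mul_div, div_one, mul_comm]

lemma lintegral_gaussianWeight_inv {S : Matrix ι ι ℝ} (hS : S.PosDef) :
    ∫⁻ z, gaussianWeight S⁻¹ z = ENNReal.ofReal (√(2 * π) ^ Fintype.card ι * √S.det) := by
  obtain ⟨R, hR⟩ := CStarAlgebra.nonneg_iff_eq_star_mul_self.mp hS.inv.posSemidef.nonneg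
  have hweight (z : ι → ℝ) : gaussianWeight S⁻¹ z = gaussianWeight 1 (Matrix.toLin' R z) := by
    simp only [gaussianWeight, toLin'_apply, one_mulVec, hR, star_eq_conjTranspose,
      conjTranspose_eq_transpose_of_trivial, ← mulVec_mulVec, dotProduct_mulVec, vecMul_transpose]
  have hdetR : R.det ^ 2 = S.det⁻¹ := by
    rw [← Ring.inverse_eq_inv', ← det_nonsing_inv, hR, star_eq_conjTranspose, det_mul,
      det_conjTranspose, star_trivial, sq]
  have hR0 : R.det ≠ 0 := fun h => hS.det_pos.ne (by simpa [h] using hdetR)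
  simp_rw [hweight]
  rw [← lintegral_map (by fun_prop) (LinearMap.continuous_of_finiteDimensional _).measurable,
    Real.map_matrix_volume_pi_eq_smul_volume_pi hR0, lintegral_smul_measure,
    lintegral_gaussianWeight_one, smul_eq_mul, ← ENNReal.ofReal_mul (by positivity), mul_comm]
  congr 2
  rw [abs_inv, ← sqrt_sq_eq_abs, hdetR, sqrt_inv, inv_inv]

theorem isProbabilityMeasure_mvGaussian (μ : ι → ℝ) {S : Matrix ι ι ℝ} (hS : S.PosDef) :
    IsProbabilityMeasure (mvGaussian μ S) := by
  have hc : 0 < √(2 * π) ^ Fintype.card ι * √S.det := by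
    have := hS.det_pos
    positivity
  constructor
  rw [mvGaussian_eq_smul_withDensity μ hS.det_pos.le, Measure.smul_apply,
    withDensity_apply _ MeasurableSet.univ, Measure.restrict_univ,
    lintegral_sub_right_eq_self (gaussianWeight S⁻¹) μ, lintegral_gaussianWeight_inv hS,
    smul_eq_mul, ← ENNReal.ofReal_mul (inv_nonneg.mpr hc.le), inv_mul_cancel₀ hc.ne',
    ENNReal.ofReal_one]

end Gaussian

section Schur

variable {m n K : Type*} [Fintype m] [Fintype n] [DecidableEq m] [DecidableEq n] [Field K]

theorem inv_fromBlocks_mulVec_sumElim {A : Matrix m m K} {B : Matrix n m K} {C : Matrix n n K}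
    (hA : IsUnit A.det) (hS : IsUnit (C - B * A⁻¹ * Bᵀ).det) (y : m → K) (f : n → K) :
    (fromBlocks A Bᵀ B C)⁻¹ *ᵥ Sum.elim y f =
      Sum.elim (A⁻¹ *ᵥ (y - Bᵀ *ᵥ (C - B * A⁻¹ * Bᵀ)⁻¹ *ᵥ (f - B *ᵥ A⁻¹ *ᵥ y)))
        ((C - B * A⁻¹ * Bᵀ)⁻¹ *ᵥ (f - B *ᵥ A⁻¹ *ᵥ y)) := by
  set S := C - B * A⁻¹ * Bᵀ with hSdef
  set w := S⁻¹ *ᵥ (f - B *ᵥ A⁻¹ *ᵥ y)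
  have hSw : S *ᵥ w = f - B *ᵥ A⁻¹ *ᵥ y := by
    rw [mulVec_mulVec, mul_nonsing_inv _ hS, one_mulVec]
  clear_value w
  let := A.invertibleOfIsUnitDet hA
  have hdet : IsUnit (fromBlocks A Bᵀ B C).det := by
    rw [det_fromBlocks₁₁, invOf_eq_nonsing_inv]
    exact hA.mul hS
  let := (fromBlocks A Bᵀ B C).invertibleOfIsUnitDet hdet
  refine inv_mulVec_eq_vec ?_
  rw [fromBlocks_mulVec, Sum.elim_comp_inl, Sum.elim_comp_inr, mulVec_mulVec,
    mul_nonsing_inv _ hA, one_mulVec, sub_add_cancel, ← sub_add_cancel C (B * A⁻¹ * Bᵀ), ← hSdef,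
    add_mulVec, hSw, ← mulVec_mulVec, ← mulVec_mulVec]
  simp only [mulVec_sub]
  congr 1
  abel

theorem sumElim_dotProduct_inv_fromBlocks_mulVec {A : Matrix m m K} {B : Matrix n m K}
    {C : Matrix n n K} (hAs : A.IsSymm) (hA : IsUnit A.det) (hS : IsUnit (C - B * A⁻¹ * Bᵀ).det)
    (y : m → K) (f : n → K) :
    Sum.elim y f ⬝ᵥ (fromBlocks A Bᵀ B C)⁻¹ *ᵥ Sum.elim y f =
      y ⬝ᵥ A⁻¹ *ᵥ y + (f - B *ᵥ A⁻¹ *ᵥ y) ⬝ᵥ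
        (C - B * A⁻¹ * Bᵀ)⁻¹ *ᵥ (f - B *ᵥ A⁻¹ *ᵥ y) := by
  set w := (C - B * A⁻¹ * Bᵀ)⁻¹ *ᵥ (f - B *ᵥ A⁻¹ *ᵥ y)
  have hsymm : y ⬝ᵥ A⁻¹ *ᵥ Bᵀ *ᵥ w = (B *ᵥ A⁻¹ *ᵥ y) ⬝ᵥ w := by
    rw [dotProduct_mulVec, ← mulVec_transpose, transpose_nonsing_inv, hAs.eq, dotProduct_mulVec,
      vecMul_transpose]
  rw [inv_fromBlocks_mulVec_sumElim hA hS, sumElim_dotProduct_sumElim, mulVec_sub, dotProduct_sub,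
    hsymm, sub_dotProduct]
  ring

end Schur

lemma MeasureTheory.MeasurePreserving.map_withDensity {α β : Type*} [MeasurableSpace α]
    [MeasurableSpace β] {μ : Measure α} {ν : Measure β} {e : α ≃ᵐ β}
    (he : MeasurePreserving e μ ν) (f : α → ℝ≥0∞) :
    (μ.withDensity f).map e = ν.withDensity (f ∘ e.symm) := by
  ext s hs
  rw [Measure.map_apply e.measurable hs, withDensity_apply _ (e.measurable hs),
    withDensity_apply _ hs, ← he.setLIntegral_comp_preimage_emb e.measurableEmbedding]
  simp only [Function.comp_apply, MeasurableEquiv.symm_apply_apply]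

section Shear

variable {m n : Type*} [Fintype m] [Fintype n]

noncomputable def shearMulVec (K : Matrix n m ℝ) : (m → ℝ) × (n → ℝ) ≃ᵐ (m → ℝ) × (n → ℝ) where
  toFun w := (w.1, w.2 - K *ᵥ w.1)
  invFun w := (w.1, w.2 + K *ᵥ w.1)
  left_inv w := by simp
  right_inv w := by simp
  measurable_toFun := by
    change Measurable fun w : (m → ℝ) × (n → ℝ) => (w.1, w.2 - K *ᵥ w.1)
    fun_prop
  measurable_invFun := by
    change Measurable fun w : (m → ℝ) × (n → ℝ) => (w.1, w.2 + K *ᵥ w.1)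
    fun_prop

theorem measurePreserving_shearMulVec (K : Matrix n m ℝ) :
    MeasurePreserving (shearMulVec K) volume volume := by
  rw [Measure.volume_eq_prod]
  refine (MeasurePreserving.id volume).skew_product (g := fun y f => f - K *ᵥ y) (by fun_prop)
    (ae_of_all _ fun y => ?_)
  simpa only [sub_eq_add_neg] using map_add_right_eq_self volume (-(K *ᵥ y))

end Shear

section Conditioning

variable {m n : Type*} [Fintype m] [Fintype n] [DecidableEq m] [DecidableEq n]

theorem Matrix.PosDef.schur_complement₁₁ {A : Matrix m m ℝ} {B : Matrix n m ℝ}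
    {C : Matrix n n ℝ} (hA : A.PosDef) (h : (fromBlocks A Bᵀ B C).PosDef) :
    (C - B * A⁻¹ * Bᵀ).PosDef := by
  let := hA.isUnit.invertible
  have hpsd : (C - B * A⁻¹ * Bᵀ).PosSemidef := by
    simpa using (hA.fromBlocks₁₁ Bᵀ C).mp (by simpa using h.posSemidef)
  refine hpsd.posDef_iff_det_ne_zero.mpr fun h0 => h.det_pos.ne' ?_
  rw [det_fromBlocks₁₁, invOf_eq_nonsing_inv, h0, mul_zero]

lemma gaussianWeight_inv_fromBlocks {A : Matrix m m ℝ} {B : Matrix n m ℝ} {C : Matrix n n ℝ}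
    (hAs : A.IsSymm) (hA : IsUnit A.det) (hS : IsUnit (C - B * A⁻¹ * Bᵀ).det) (y : m → ℝ)
    (f : n → ℝ) :
    gaussianWeight (fromBlocks A Bᵀ B C)⁻¹ (Sum.elim y f) =
      gaussianWeight A⁻¹ y * gaussianWeight (C - B * A⁻¹ * Bᵀ)⁻¹ (f - B *ᵥ A⁻¹ *ᵥ y) := by
  rw [gaussianWeight, sumElim_dotProduct_inv_fromBlocks_mulVec hAs hA hS, mul_add, exp_add,
    ENNReal.ofReal_mul (exp_pos _).le]
  rfl

theorem map_mvGaussian_fromBlocks {A : Matrix m m ℝ} {B : Matrix n m ℝ} {C : Matrix n n ℝ}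
    (hA : A.PosDef) (hS : (C - B * A⁻¹ * Bᵀ).PosDef) :
    (mvGaussian 0 (fromBlocks A Bᵀ B C)).map
        (fun w => (w ∘ Sum.inl, w ∘ Sum.inr - B *ᵥ A⁻¹ *ᵥ (w ∘ Sum.inl))) =
      (mvGaussian 0 A).prod (mvGaussian 0 (C - B * A⁻¹ * Bᵀ)) := by
  set S := C - B * A⁻¹ * Bᵀ
  let Ψ := (MeasurableEquiv.sumPiEquivProdPi fun _ : m ⊕ n => ℝ).trans (shearMulVec (B * A⁻¹))
  have hΨ : MeasurePreserving Ψ volume volume :=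
    (measurePreserving_shearMulVec _).comp (volume_measurePreserving_sumPiEquivProdPi _)
  have hdet : (fromBlocks A Bᵀ B C).det = A.det * S.det := by
    let := hA.isUnit.invertible
    rw [det_fromBlocks₁₁, invOf_eq_nonsing_inv]
  have hdetBlk : 0 ≤ (fromBlocks A Bᵀ B C).det := by
    rw [hdet]
    exact mul_nonneg hA.det_pos.le hS.det_pos.le
  have hconst :
      ENNReal.ofReal (√(2 * π) ^ Fintype.card (m ⊕ n) * √(fromBlocks A Bᵀ B C).det)⁻¹ =
      ENNReal.ofReal (√(2 * π) ^ Fintype.card m * √A.det)⁻¹ *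
        ENNReal.ofReal (√(2 * π) ^ Fintype.card n * √S.det)⁻¹ := by
    rw [Fintype.card_sum, pow_add, hdet, sqrt_mul hA.det_pos.le, mul_mul_mul_comm, mul_inv,
      ENNReal.ofReal_mul (by positivity)]
  have hdensity : (fun z => gaussianWeight (fromBlocks A Bᵀ B C)⁻¹ (z - 0)) ∘ Ψ.symm =
      fun x => gaussianWeight A⁻¹ (x.1 - 0) * gaussianWeight S⁻¹ (x.2 - 0) := by
    funext ⟨y, g⟩
    have hsplit : Ψ.symm (y, g) = Sum.elim y (g + (B * A⁻¹) *ᵥ y) := by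
      funext i
      cases i <;> rfl
    simp only [Function.comp_apply, sub_zero, hsplit]
    rw [gaussianWeight_inv_fromBlocks (isHermitian_iff_isSymm.mp hA.isHermitian)
      hA.det_pos.ne'.isUnit hS.det_pos.ne'.isUnit, ← mulVec_mulVec, add_sub_cancel_right]
  have hΨeq : (fun w => (w ∘ Sum.inl, w ∘ Sum.inr - B *ᵥ A⁻¹ *ᵥ (w ∘ Sum.inl))) = ⇑Ψ := by
    funext w
    simp only [Ψ, shearMulVec, mulVec_mulVec]
    rfl
  rw [hΨeq, mvGaussian_eq_smul_withDensity 0 hdetBlk, Measure.map_smul, hΨ.map_withDensity,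
    hdensity, mvGaussian_eq_smul_withDensity 0 hA.det_pos.le,
    mvGaussian_eq_smul_withDensity 0 hS.det_pos.le, Measure.prod_smul_left,
    Measure.prod_smul_right, smul_smul, prod_withDensity (by fun_prop) (by fun_prop),
    ← Measure.volume_eq_prod, hconst]

end Conditioning

lemma ProbabilityTheory.indepFun_and_map_eq_of_map_prodMk_eq {Ω α β : Type*}
    {mΩ : MeasurableSpace Ω} [MeasurableSpace α] [MeasurableSpace β] {P : Measure Ω}
    [IsFiniteMeasure P] {X : Ω → α} {Y : Ω → β} {μ : Measure α} {ν : Measure β}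
    [IsProbabilityMeasure μ] [IsProbabilityMeasure ν]
    (hX : Measurable X) (hY : Measurable Y) (h : P.map (fun ω => (X ω, Y ω)) = μ.prod ν) :
    IndepFun X Y P ∧ P.map X = μ ∧ P.map Y = ν := by
  have hXμ : P.map X = μ := by rw [← Measure.fst_map_prodMk hY, h, Measure.fst_prod]
  have hYν : P.map Y = ν := by rw [← Measure.snd_map_prodMk hX, h, Measure.snd_prod]
  refine ⟨?_, hXμ, hYν⟩
  rw [indepFun_iff_map_prod_eq_prod_map_map hX.aemeasurable hY.aemeasurable, h, hXμ, hYν]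

theorem gaussian_conditional_covariance_independence_general
    {Ω : Type*} {mΩ : MeasurableSpace Ω} (P : Measure Ω) [IsProbabilityMeasure P]
    (p m : ℕ)
    (A : Matrix (Fin p) (Fin p) ℝ) (hA : A.PosDef)
    (C : Matrix (Fin m) (Fin m) ℝ)
    (B : Matrix (Fin m) (Fin p) ℝ)
    (hBlk : (Matrix.fromBlocks A Bᵀ B C).PosSemidef)
    (W : Ω → (Fin p ⊕ Fin m) → ℝ) (hW : Measurable W)
    (hlaw : Measure.map W P = mvGaussian 0 (Matrix.fromBlocks A Bᵀ B C)) :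
    IndepFun
      (fun ω (j : Fin m) =>
        W ω (Sum.inr j) - B.mulVec (A⁻¹.mulVec fun i => W ω (Sum.inl i)) j)
      (fun ω (i : Fin p) => W ω (Sum.inl i)) P ∧
    Measure.map
      (fun ω (j : Fin m) =>
        W ω (Sum.inr j) - B.mulVec (A⁻¹.mulVec fun i => W ω (Sum.inl i)) j) P
      = mvGaussian 0 (C - B * A⁻¹ * Bᵀ) := by
  have hlawProb : IsProbabilityMeasure (mvGaussian 0 (fromBlocks A Bᵀ B C)) :=
    hlaw ▸ Measure.isProbabilityMeasure_map hW.aemeasurable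
  have hBlk' : (fromBlocks A Bᵀ B C).PosDef := hBlk.posDef_iff_det_ne_zero.mpr fun h0 => by
    simpa [mvGaussian_eq_zero_of_det_eq_zero 0 h0] using hlawProb.measure_univ
  have hS := hA.schur_complement₁₁ hBlk'
  have := isProbabilityMeasure_mvGaussian 0 hA
  have := isProbabilityMeasure_mvGaussian 0 hS
  have hmap := map_mvGaussian_fromBlocks hA hS
  rw [← hlaw, Measure.map_map (by fun_prop) hW] at hmap
  obtain ⟨hind, -, hG⟩ := indepFun_and_map_eq_of_map_prodMk_eq (by fun_prop) (by fun_prop) hmap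
  exact ⟨hind.symm, hG⟩

/-- Conditional covariance and independence for a Gaussian vector: if `(Y, F)` is jointly
centered Gaussian with covariance `[[A, Bᵀ],[B, C]]` (`A` positive definite), then
`F - B A⁻¹ Y` is independent of `Y` and its law is the centered Gaussian with covariance
`C - B A⁻¹ Bᵀ`. This underlies the GPR conditional-covariance formula. -/
theorem gaussian_conditional_covariance_independence
    {Ω : Type*} {mΩ : MeasurableSpace Ω} (P : Measure Ω) [IsProbabilityMeasure P]
    (p m : ℕ) (hp : 1 ≤ p) (hm : 1 ≤ m)
    (A : Matrix (Fin p) (Fin p) ℝ) (hA : A.PosDef)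
    (C : Matrix (Fin m) (Fin m) ℝ) (hC : C.IsSymm)
    (B : Matrix (Fin m) (Fin p) ℝ)
    (hBlk : (Matrix.fromBlocks A Bᵀ B C).PosSemidef)
    (W : Ω → (Fin p ⊕ Fin m) → ℝ) (hW : Measurable W)
    (hlaw : Measure.map W P = mvGaussian 0 (Matrix.fromBlocks A Bᵀ B C)) :
    IndepFun
      (fun ω (j : Fin m) =>
        W ω (Sum.inr j) - B.mulVec (A⁻¹.mulVec fun i => W ω (Sum.inl i)) j)
      (fun ω (i : Fin p) => W ω (Sum.inl i)) P ∧
    Measure.map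
      (fun ω (j : Fin m) =>
        W ω (Sum.inr j) - B.mulVec (A⁻¹.mulVec fun i => W ω (Sum.inl i)) j) P
      = mvGaussian 0 (C - B * A⁻¹ * Bᵀ) :=
  gaussian_conditional_covariance_independence_general (mΩ := mΩ) P p m A hA C B hBlk W hW hlaw
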